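/- arXiv:2408.00393 — 5 statements merged into one kernel-verified Lean document; each statement's English description precedes it below -/
import Mathlib

section
/- Let ζ : X ⇸ Y be a Q-map. Then ζ is symmetric (i.e., ζ*(y,x) = ζ(x,y) for all x ∈ X, y ∈ Y) if and only if the Q-relation ζ_s : X ⇸ Y defined by ζ_s(x,y) = ζ(x,y) ∧ ζ*(y,x) is a symmetric Q-map, i.e., id_X ≤ ζ_s^op ∘ ζ_s and ζ_s ∘ ζ_s^op ≤ id_Y, where ζ_s^op(y,x) = ζ_s(x,y). -/
/-!
If `ζ* = ζ^op`, then `ζ_s = ζ` and `ζ_s^op = ζ*`, so the two conditions on `ζ_s` are those of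
the `Q`-map `ζ`. Conversely, fix `x` and write `u = ζ_s x`. Reflexivity of `ζ_s^op ∘ ζ_s` at
`(x, x)` gives `k ≤ ⋁ y', u y' & u y'`, so any `p` with `p & v y' ≤ id_Y(y, y')` for all `y'`,
where `u ≤ v`, satisfies `p ≤ p & ⋁ y', u y' & u y' ≤ ⋁ y', id_Y(y, y') & u y' = u y`.
Taking `p = ζ*(y,x)`, `v = ζ x` and `p = ζ(x,y)`, `v = ζ*(-,x)`, both sides are `≤ ζ_s(x,y)`,
hence `ζ*(y,x) ≤ ζ(x,y)` and `ζ(x,y) ≤ ζ*(y,x)`.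
-/

open Classical

noncomputable section

/-- Composition of `Q`-relations: `(ψ ∘ φ)(x,z) = ⨆ y, ψ y z & φ x y`. -/
def QR.comp {Q : Type*} [CompleteLattice Q] [Mul Q] {X Y Z : Type*}
    (ψ : Y → Z → Q) (φ : X → Y → Q) : X → Z → Q :=
  fun x z => ⨆ y, ψ y z * φ x y

/-- The identity `Q`-relation on `X`: `k` on the diagonal and `⊥` elsewhere. -/
def QR.id {Q : Type*} [CompleteLattice Q] [One Q] (X : Type*) : X → X → Q :=
  fun x y => if x = y then 1 else ⊥

/-- `ζ*(y,x) = ⨅ z, (ζ x z → id_Y y z)`, the canonical right-adjoint candidate of `ζ`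
with respect to the residuation `himp`. -/
def QR.star {Q : Type*} [CompleteLattice Q] [One Q] {X Y : Type*}
    (himp : Q → Q → Q) (ζ : X → Y → Q) : Y → X → Q :=
  fun y x => ⨅ z, himp (ζ x z) (QR.id Y y z)

/-- `ζ` is a `Q`-map: `id_X ≤ ζ* ∘ ζ` and `ζ ∘ ζ* ≤ id_Y`. -/
def QR.IsMap {Q : Type*} [CompleteLattice Q] [Mul Q] [One Q] {X Y : Type*}
    (himp : Q → Q → Q) (ζ : X → Y → Q) : Prop :=
  (∀ x x', QR.id X x x' ≤ QR.comp (QR.star himp ζ) ζ x x') ∧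
  (∀ y y', QR.comp ζ (QR.star himp ζ) y y' ≤ QR.id Y y y')

open Quantale

theorem IsQuantale.of_mul_sSup_distrib {Q : Type*} [CommSemigroup Q] [CompleteLattice Q]
    (h : ∀ (p : Q) (s : Set Q), p * sSup s = ⨆ q ∈ s, p * q) : IsQuantale Q where
  mul_sSup_distrib := h
  sSup_mul_distrib s y := by simpa only [mul_comm] using h y s

namespace QR

section

variable {Q : Type*} [CompleteLattice Q] {X Y : Type*}

theorem id_self [One Q] (x : X) : QR.id X x x = (1 : Q) := if_pos rfl

theorem id_comm [One Q] (x y : X) : QR.id X x y = (QR.id X y x : Q) := by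
  simp only [QR.id, eq_comm]

theorem id_mul_le [Monoid Q] [IsQuantale Q] (f : Y → Q) (y y' : Y) :
    QR.id Y y y' * f y' ≤ f y := by
  by_cases h : y = y'
  · rw [h, id_self, one_mul]
  · simp only [QR.id, h, if_false, bot_mul, bot_le]

theorem star_mul_le_id [Mul Q] [One Q] {himp : Q → Q → Q}
    (hres : ∀ p q r : Q, p * q ≤ r ↔ p ≤ himp q r) (ζ : X → Y → Q) (x : X) (y z : Y) :
    QR.star himp ζ y x * ζ x z ≤ QR.id Y y z :=
  (hres _ _ _).mpr (iInf_le _ z)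

theorem le_apply_of_one_le_iSup_mul_self [Monoid Q] [IsQuantale Q] {u v : Y → Q}
    (hu : 1 ≤ ⨆ y', u y' * u y') (huv : u ≤ v) {p : Q} {y : Y}
    (hp : ∀ y', p * v y' ≤ QR.id Y y y') : p ≤ u y :=
  calc p = p * 1 := (mul_one p).symm
    _ ≤ p * ⨆ y', u y' * u y' := mul_le_mul_right hu p
    _ = ⨆ y', p * u y' * u y' := by simp only [mul_iSup_distrib, mul_assoc]
    _ ≤ ⨆ y', QR.id Y y y' * u y' :=
        iSup_mono fun y' => mul_le_mul_left ((mul_le_mul_right (huv y') p).trans (hp y')) _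
    _ ≤ u y := iSup_le fun y' => id_mul_le u y y'

theorem star_eq_of_le_inf_star [CommMonoid Q] [IsQuantale Q] {himp : Q → Q → Q}
    (hres : ∀ p q r : Q, p * q ≤ r ↔ p ≤ himp q r) {ζ ζs : X → Y → Q}
    (hle : ∀ x y, ζs x y ≤ ζ x y ⊓ QR.star himp ζ y x)
    (hid : ∀ x x', QR.id X x x' ≤ QR.comp (fun y x => ζs x y) ζs x x') (x : X) (y : Y) :
    QR.star himp ζ y x = ζ x y := by
  have hu : 1 ≤ ⨆ y', ζs x y' * ζs x y' := by simpa only [id_self, QR.comp] using hid x x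
  apply le_antisymm
  · calc QR.star himp ζ y x ≤ ζs x y :=
          le_apply_of_one_le_iSup_mul_self hu (fun y' => (hle x y').trans inf_le_left)
            fun y' => star_mul_le_id hres ζ x y y'
      _ ≤ ζ x y := (hle x y).trans inf_le_left
  · calc ζ x y ≤ ζs x y :=
          le_apply_of_one_le_iSup_mul_self hu (v := fun y' => QR.star himp ζ y' x)
            (fun y' => (hle x y').trans inf_le_right) fun y' => by
              rw [mul_comm, id_comm]
              exact star_mul_le_id hres ζ x y' y
      _ ≤ QR.star himp ζ y x := (hle x y).trans inf_le_right

end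

end QR

theorem stmt4_general {Q : Type*} [CompleteLattice Q] [CommMonoid Q]
    (hdist : ∀ (p : Q) (s : Set Q), p * sSup s = ⨆ q ∈ s, p * q)
    (himp : Q → Q → Q)
    (hres : ∀ p q r : Q, p * q ≤ r ↔ p ≤ himp q r)
    {X Y : Type*} (ζ : X → Y → Q) (hζ : QR.IsMap himp ζ)
    (ζs : X → Y → Q) (hζs : ∀ x y, ζs x y = ζ x y ⊓ QR.star himp ζ y x) :
    (∀ (x : X) (y : Y), QR.star himp ζ y x = ζ x y) ↔
      ((∀ x x', QR.id X x x' ≤ QR.comp (fun y x => ζs x y) ζs x x') ∧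
       (∀ y y', QR.comp ζs (fun y x => ζs x y) y y' ≤ QR.id Y y y')) := by
  constructor
  · intro hsymm
    have hs : ζs = ζ := funext₂ fun x y => by rw [hζs, hsymm, inf_idem]
    have hop : (fun y x => ζ x y) = QR.star himp ζ := funext₂ fun y x => (hsymm x y).symm
    subst hs
    rw [hop]
    exact hζ
  · rintro ⟨hid, -⟩
    have := IsQuantale.of_mul_sSup_distrib hdist
    exact QR.star_eq_of_le_inf_star hres (fun x y => (hζs x y).le) hid

/-- a `Q`-map `ζ` is symmetric (`ζ*(y,x) = ζ(x,y)`) iff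
`ζ_s(x,y) = ζ(x,y) ∧ ζ*(y,x)` is a symmetric `Q`-map, i.e.
`id_X ≤ ζ_s^op ∘ ζ_s` and `ζ_s ∘ ζ_s^op ≤ id_Y`. -/
theorem stmt4 {Q : Type*} [CompleteLattice Q] [CommMonoid Q]
    (hbot : (⊥ : Q) < 1)
    (hdist : ∀ (p : Q) (s : Set Q), p * sSup s = ⨆ q ∈ s, p * q)
    (himp : Q → Q → Q)
    (hres : ∀ p q r : Q, p * q ≤ r ↔ p ≤ himp q r)
    {X Y : Type*} (ζ : X → Y → Q) (hζ : QR.IsMap himp ζ)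
    (ζs : X → Y → Q) (hζs : ∀ x y, ζs x y = ζ x y ⊓ QR.star himp ζ y x) :
    (∀ (x : X) (y : Y), QR.star himp ζ y x = ζ x y) ↔
      ((∀ x x', QR.id X x x' ≤ QR.comp (fun y x => ζs x y) ζs x x') ∧
       (∀ y y', QR.comp ζs (fun y x => ζs x y) y y' ≤ QR.id Y y y')) :=
  stmt4_general hdist himp hres ζ hζ ζs hζs
end
end

section
/- If Q is an integral quantale (i.e., k = ⊤), then Q is weakly lean. -/
/-- `Q` is lean. -/
def IsLeanQuantale (Q : Type*) [CompleteLattice Q] [CommMonoid Q] : Prop :=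
  (∀ p q : Q, p ⊔ q = 1 → p * q = ⊥ → p = 1 ∨ q = 1) ∧
  (∀ p q : Q, p * q = 1 ↔ p = 1 ∧ q = 1)

/-- `Q` is weakly lean. -/
def IsWeaklyLeanQuantale (Q : Type*) [CompleteLattice Q] [CommMonoid Q] : Prop :=
  ∀ (I : Type) (p q : I → Q),
    (⨆ i, p i * q i) = 1 → (∀ i j, i ≠ j → p i * q j = ⊥) →
    1 ≤ ⨆ i, (p i ⊓ q i) * (p i ⊓ q i)

/-!
Squaring `1 = ⨆ i, p i * q i` gives `1 = ⨆ i j, p i * q i * (p j * q j)`. Off the diagonal the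
term regroups as `(p i * q j) * (q i * p j) = ⊥`, and on the diagonal integrality gives
`p i * q i ≤ p i ⊓ q i`.
-/

theorem isQuantale_of_mul_sSup_distrib {Q : Type*} [CompleteLattice Q] [CommMonoid Q]
    (hdist : ∀ (p : Q) (s : Set Q), p * sSup s = ⨆ q ∈ s, p * q) : IsQuantale Q where
  mul_sSup_distrib := hdist
  sSup_mul_distrib s x := by
    rw [mul_comm, hdist]
    exact iSup_congr fun y => iSup_congr fun _ => mul_comm x y

namespace Quantale

variable {Q : Type*} [CompleteLattice Q]

theorem iSup_mul_iSup [Semigroup Q] [IsQuantale Q] {ι κ : Type*} (f : ι → Q) (g : κ → Q) :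
    (⨆ i, f i) * (⨆ j, g j) = ⨆ i, ⨆ j, f i * g j := by
  rw [iSup_mul_distrib]
  simp only [mul_iSup_distrib]

theorem iSup_mul_self_of_orthogonal [CommSemigroup Q] [IsQuantale Q] {ι : Type*} {p q : ι → Q}
    (horth : ∀ i j, i ≠ j → p i * q j = ⊥) :
    (⨆ i, p i * q i) * (⨆ i, p i * q i) = ⨆ i, p i * q i * (p i * q i) := by
  rw [iSup_mul_iSup]
  refine le_antisymm (iSup₂_le fun i j => ?_) (iSup_mono fun i => le_iSup_of_le i le_rfl)
  obtain rfl | hij := eq_or_ne i j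
  · exact le_iSup_of_le i le_rfl
  · calc p i * q i * (p j * q j) = p i * q j * (q i * p j) := by ac_rfl
      _ = ⊥ := by rw [horth i j hij, bot_mul]
      _ ≤ _ := bot_le

theorem mul_le_inf_of_one_eq_top [Monoid Q] [IsQuantale Q] (hint : (1 : Q) = ⊤) (a b : Q) : a * b ≤ a ⊓ b :=
  le_inf (mul_le_of_le_one_right' (hint ▸ le_top)) (mul_le_of_le_one_left' (hint ▸ le_top))

end Quantale

open Quantale in
theorem stmt7_general {Q : Type*} [CompleteLattice Q] [CommMonoid Q]
    (hdist : ∀ (p : Q) (s : Set Q), p * sSup s = ⨆ q ∈ s, p * q)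
    (hint : (1 : Q) = ⊤) :
    IsWeaklyLeanQuantale Q := by
  have : IsQuantale Q := isQuantale_of_mul_sSup_distrib hdist
  intro I p q hsup horth
  have hdiag (i : I) : p i * q i ≤ p i ⊓ q i := mul_le_inf_of_one_eq_top hint _ _
  calc (1 : Q) = (⨆ i, p i * q i) * (⨆ i, p i * q i) := by rw [hsup, one_mul]
    _ = ⨆ i, p i * q i * (p i * q i) := iSup_mul_self_of_orthogonal horth
    _ ≤ ⨆ i, (p i ⊓ q i) * (p i ⊓ q i) := iSup_mono fun i => mul_le_mul' (hdiag i) (hdiag i)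

/-- every integral quantale (`k = ⊤`) is weakly lean. -/
theorem stmt7 {Q : Type*} [CompleteLattice Q] [CommMonoid Q]
    (hbot : (⊥ : Q) < 1)
    (hdist : ∀ (p : Q) (s : Set Q), p * sSup s = ⨆ q ∈ s, p * q)
    (hint : (1 : Q) = ⊤) :
    IsWeaklyLeanQuantale Q :=
  stmt7_general hdist hint
end

section
/- Let Q be a non-trivial commutative unital quantale. Every Q-map between arbitrary sets is symmetric if and only if Q is weakly lean. -/
open Classical

noncomputable section

/-!
For a `Q`-map `ζ` and a point `x`, the families `y ↦ ζ*(y,x)` and `y ↦ ζ(x,y)` form an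
orthogonal pair `(p, q)`: `⋁ p_i & q_i = k` and `p_i & q_j = ⊥` for `i ≠ j`. Conversely, an
orthogonal pair `(p, q)` indexed by `I` yields the `Q`-map `ζ(∗,i) = q_i` out of a point, with
`p ≤ ζ*`. So all `Q`-maps are symmetric iff every orthogonal pair has `p = q`, and this is
equivalent to weak leanness: with `s = p ⊓ q` and `k ≤ ⋁ s_i & s_i`, the cross terms vanish in
`p_j = p_j & k ≤ ⋁_i p_j & s_i & s_i`, leaving `p_j & q_j & q_j ≤ q_j`
because `p_j & q_j ≤ k`.
-/

section OrthogonalPair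

open Quantale

variable {Q : Type*} [CompleteLattice Q] [CommMonoid Q]

theorem isQuantale_of_mul_sSup (hdist : ∀ (p : Q) (s : Set Q), p * sSup s = ⨆ q ∈ s, p * q) :
    IsQuantale Q where
  mul_sSup_distrib := hdist
  sSup_mul_distrib s p := by simpa only [mul_comm] using hdist p s

def IsOrthogonalPair {I : Type*} (p q : I → Q) : Prop :=
  (⨆ i, p i * q i) = 1 ∧ ∀ i j, i ≠ j → p i * q j = ⊥

namespace IsOrthogonalPair

variable {I : Type*} {p q : I → Q}

theorem symm (h : IsOrthogonalPair p q) : IsOrthogonalPair q p :=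
  ⟨by simpa only [mul_comm] using h.1, fun i j hij => by rw [mul_comm, h.2 j i hij.symm]⟩

theorem mul_le_one (h : IsOrthogonalPair p q) (i : I) : p i * q i ≤ 1 :=
  h.1 ▸ le_iSup (fun i => p i * q i) i

theorem le_of_one_le_iSup_inf_mul [IsQuantale Q] (h : IsOrthogonalPair p q)
    (hk : 1 ≤ ⨆ i, (p i ⊓ q i) * (p i ⊓ q i)) (j : I) : p j ≤ q j := by
  calc p j = p j * 1 := (mul_one _).symm
    _ ≤ p j * ⨆ i, (p i ⊓ q i) * (p i ⊓ q i) := mul_le_mul_right hk _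
    _ = ⨆ i, p j * ((p i ⊓ q i) * (p i ⊓ q i)) := mul_iSup_distrib
    _ ≤ q j := iSup_le fun i => ?_
  rcases eq_or_ne j i with rfl | hji
  · calc p j * ((p j ⊓ q j) * (p j ⊓ q j)) ≤ p j * q j * q j := by
          rw [mul_assoc]; gcongr <;> exact inf_le_right
      _ ≤ 1 * q j := mul_le_mul_left (h.mul_le_one j) _
      _ = q j := one_mul _
  · calc p j * ((p i ⊓ q i) * (p i ⊓ q i)) ≤ p j * q i * (p i ⊓ q i) := by
          rw [mul_assoc]; gcongr; exact inf_le_right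
      _ = ⊥ := by rw [h.2 j i hji, bot_mul]
      _ ≤ q j := bot_le

end IsOrthogonalPair

theorem isWeaklyLeanQuantale_iff_forall_isOrthogonalPair_eq [IsQuantale Q] :
    IsWeaklyLeanQuantale Q ↔ ∀ (I : Type) (p q : I → Q), IsOrthogonalPair p q → p = q := by
  constructor
  · intro hwl I p q h
    have hk := hwl I p q h.1 h.2
    refine funext fun i => le_antisymm (h.le_of_one_le_iSup_inf_mul hk i) ?_
    exact h.symm.le_of_one_le_iSup_inf_mul (by simpa only [inf_comm] using hk) i
  · intro horth I p q h1 h2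
    obtain rfl := horth I p q ⟨h1, h2⟩
    simp only [inf_idem, h1, le_refl]

end OrthogonalPair

namespace QR

variable {Q : Type*} [CompleteLattice Q] [CommMonoid Q] {himp : Q → Q → Q} {X Y : Type*}

theorem le_star_iff (hres : ∀ p q r : Q, p * q ≤ r ↔ p ≤ himp q r) {ζ : X → Y → Q} {a : Q}
    {x : X} {y : Y} : a ≤ star himp ζ y x ↔ ∀ z, a * ζ x z ≤ QR.id Y y z := by
  simp only [star, le_iInf_iff, hres]

theorem star_mul_le (hres : ∀ p q r : Q, p * q ≤ r ↔ p ≤ himp q r) (ζ : X → Y → Q)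
    (x : X) (y z : Y) : star himp ζ y x * ζ x z ≤ QR.id Y y z :=
  (le_star_iff hres).1 le_rfl z

theorem comp_star_le_id (hres : ∀ p q r : Q, p * q ≤ r ↔ p ≤ himp q r) (ζ : X → Y → Q)
    (y y' : Y) : comp ζ (star himp ζ) y y' ≤ QR.id Y y y' :=
  iSup_le fun x => mul_comm (ζ x y') _ ▸ star_mul_le hres ζ x y y'

theorem IsMap.isOrthogonalPair (hres : ∀ p q r : Q, p * q ≤ r ↔ p ≤ himp q r)
    {ζ : X → Y → Q} (hζ : IsMap himp ζ) (x : X) :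
    IsOrthogonalPair (fun y => star himp ζ y x) (ζ x) := by
  refine ⟨le_antisymm (iSup_le fun y => ?_) ?_, fun y z hyz => ?_⟩
  · simpa only [QR.id, if_pos] using star_mul_le hres ζ x y y
  · simpa only [QR.id, if_pos, comp] using hζ.1 x x
  · simpa only [QR.id, if_neg hyz, le_bot_iff] using star_mul_le hres ζ x y z

end QR

namespace IsOrthogonalPair

variable {Q : Type*} [CompleteLattice Q] [CommMonoid Q] {himp : Q → Q → Q} {I : Type*}
  {p q : I → Q}

theorem le_star_const (hres : ∀ p q r : Q, p * q ≤ r ↔ p ≤ himp q r)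
    (h : IsOrthogonalPair p q) (i : I) : p i ≤ QR.star himp (fun (_ : PUnit) => q) i () := by
  refine (QR.le_star_iff hres).2 fun j => ?_
  rcases eq_or_ne i j with rfl | hij
  · simpa only [QR.id, if_pos] using h.mul_le_one i
  · simp only [QR.id, if_neg hij, h.2 i j hij, le_refl]

theorem isMap_const [IsQuantale Q]
    (hres : ∀ p q r : Q, p * q ≤ r ↔ p ≤ himp q r) (h : IsOrthogonalPair p q) :
    QR.IsMap himp (fun (_ : PUnit) => q) := by
  refine ⟨fun _ _ => ?_, QR.comp_star_le_id hres _⟩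
  calc QR.id PUnit _ _ = ⨆ i, p i * q i := by simp only [QR.id, if_pos, h.1]
    _ ≤ _ := iSup_mono fun i => mul_le_mul_left (h.le_star_const hres i) _

end IsOrthogonalPair

theorem stmt8_general {Q : Type*} [CompleteLattice Q] [CommMonoid Q]
    (hdist : ∀ (p : Q) (s : Set Q), p * sSup s = ⨆ q ∈ s, p * q)
    (himp : Q → Q → Q)
    (hres : ∀ p q r : Q, p * q ≤ r ↔ p ≤ himp q r) :
    (∀ (X Y : Type) (ζ : X → Y → Q), QR.IsMap himp ζ →
      ∀ (x : X) (y : Y), QR.star himp ζ y x = ζ x y) ↔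
    IsWeaklyLeanQuantale Q := by
  have := isQuantale_of_mul_sSup hdist
  rw [isWeaklyLeanQuantale_iff_forall_isOrthogonalPair_eq]
  constructor
  · intro hsym I p q hpq
    have hle : ∀ {p q : I → Q}, IsOrthogonalPair p q → p ≤ q := fun h i =>
      (h.le_star_const hres i).trans_eq (hsym _ _ _ (h.isMap_const hres) () i)
    exact le_antisymm (hle hpq) (hle hpq.symm)
  · intro horth X Y ζ hζ x y
    exact congrFun (horth Y _ _ (hζ.isOrthogonalPair hres x)) y

/-- every `Q`-map between arbitrary sets is symmetric iff `Q` is weakly lean. -/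
theorem stmt8 {Q : Type*} [CompleteLattice Q] [CommMonoid Q]
    (hbot : (⊥ : Q) < 1)
    (hdist : ∀ (p : Q) (s : Set Q), p * sSup s = ⨆ q ∈ s, p * q)
    (himp : Q → Q → Q)
    (hres : ∀ p q r : Q, p * q ≤ r ↔ p ≤ himp q r) :
    (∀ (X Y : Type) (ζ : X → Y → Q), QR.IsMap himp ζ →
      ∀ (x : X) (y : Y), QR.star himp ζ y x = ζ x y) ↔
    IsWeaklyLeanQuantale Q :=
  stmt8_general hdist himp hres
end
end

section
/- Let Q be a non-trivial commutative integral quantale (k = ⊤). Then every Q-map between arbitrary sets is the graph of a map in Set if and only if for all p, q ∈ Q: (p ∨ q = ⊤ and p & q = ⊥) implies (p = ⊤ or q = ⊤). -/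
/-!
For a `Q`-map `ζ` and a point `x`, the elements `c y = ζ*(y,x) & ζ(x,y)` are pairwise disjoint
(`c y & c z ≤ ζ*(y,x) & ζ(x,z) = ⊥` for `y ≠ z`) and, by `id ≤ ζ* ∘ ζ`, join to `⊤`. Splitting
`⊤ = c y ⊔ ⨆_{z ≠ y} c z`, the condition on `Q` forces every `c y` to be `⊤` or `⊥`, and since
`⊥ ≠ ⊤` some `c y` is `⊤`; then `ζ(x, -)` is `⊤` at `y` and `⊥` elsewhere.
Conversely, if `p ⊔ q = ⊤` and `p & q = ⊥`, then `p` and `q` are idempotent and each is the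
negation `- → ⊥` of the other, so `(p, q)` is a `Q`-map from a point to a two-element set,
the graph of a function only if `p` or `q` is `⊤`.
-/

open Classical

noncomputable section

/-- The graph of a function `f : X → Y`: `k` where `y = f x` and `⊥` elsewhere. -/
def QR.graph {Q : Type*} [CompleteLattice Q] [One Q] {X Y : Type*} (f : X → Y) :
    X → Y → Q :=
  fun x y => if y = f x then 1 else ⊥

open Quantale

section IntegralQuantale

variable {Q : Type*} [CompleteLattice Q] [CommMonoid Q] [IsQuantale Q]

theorem mul_self_eq_of_sup_eq_top_of_mul_eq_bot (hint : (1 : Q) = ⊤) {p q : Q}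
    (hsup : p ⊔ q = ⊤) (hmul : p * q = ⊥) : p * p = p := by
  simpa only [mul_sup_distrib, hmul, sup_bot_eq, ← hint, mul_one] using congrArg (p * ·) hsup

theorem himp_bot_eq_of_sup_eq_top_of_mul_eq_bot (hint : (1 : Q) = ⊤) {himp : Q → Q → Q}
    (hres : ∀ p q r : Q, p * q ≤ r ↔ p ≤ himp q r) {p q : Q}
    (hsup : p ⊔ q = ⊤) (hmul : p * q = ⊥) : himp q ⊥ = p := by
  refine le_antisymm ?_ ((hres _ _ _).1 hmul.le)
  calc himp q ⊥ = himp q ⊥ * p ⊔ himp q ⊥ * q := by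
        rw [← mul_sup_distrib, hsup, ← hint, mul_one]
    _ ≤ p ⊔ ⊥ := sup_le_sup (mul_le_of_le_one_left' (hint ▸ le_top)) ((hres _ _ _).2 le_rfl)
    _ = p := sup_bot_eq p

theorem exists_eq_top_of_iSup_eq_top_of_pairwise_mul_eq_bot [Nontrivial Q]
    (hint : (1 : Q) = ⊤) (H : ∀ p q : Q, p ⊔ q = ⊤ → p * q = ⊥ → p = ⊤ ∨ q = ⊤)
    {ι : Type*} {c : ι → Q} (hsup : ⨆ i, c i = ⊤) (horth : Pairwise fun i j => c i * c j = ⊥) :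
    ∃ i, c i = ⊤ := by
  by_contra! hne
  have hbot : ∀ i, c i = ⊥ := by
    intro i
    have hsplit : c i ⊔ ⨆ (j) (_ : j ≠ i), c j = ⊤ := by rw [← iSup_split_single, hsup]
    have hmul : c i * ⨆ (j) (_ : j ≠ i), c j = ⊥ := by
      simp only [mul_iSup_distrib, iSup_eq_bot]
      intro j
      rcases eq_or_ne j i with rfl | hj
      · simp
      · rw [iSup_pos hj, horth hj.symm]
    rcases H _ _ hsplit hmul with h | h
    · exact absurd h (hne i)
    · rwa [h, ← hint, mul_one] at hmul
  exact bot_ne_top (by simpa only [hbot, iSup_bot] using hsup)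

end IntegralQuantale

namespace QR

variable {Q : Type*} [CompleteLattice Q] {himp : Q → Q → Q} {X Y : Type*}

theorem star_le_himp_bot [One Q] {ζ : X → Y → Q} {x : X} {y z : Y} (h : y ≠ z) :
    star himp ζ y x ≤ himp (ζ x z) ⊥ :=
  (iInf_le _ z).trans_eq (by rw [QR.id, if_neg h])

theorem star_mul_eq_bot [Mul Q] [One Q] (hres : ∀ p q r : Q, p * q ≤ r ↔ p ≤ himp q r)
    {ζ : X → Y → Q} {x : X} {y z : Y} (h : y ≠ z) : star himp ζ y x * ζ x z = ⊥ :=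
  le_bot_iff.1 ((hres _ _ _).2 (star_le_himp_bot h))

theorem IsMap.one_le_iSup_star_mul [Mul Q] [One Q] {ζ : X → Y → Q} (hζ : IsMap himp ζ)
    (x : X) : 1 ≤ ⨆ y, star himp ζ y x * ζ x y := by
  have h := hζ.1 x x
  rwa [QR.id, if_pos rfl] at h

theorem IsMap.exists_eq_graph [CommMonoid Q] [IsQuantale Q] [Nontrivial Q] (hint : (1 : Q) = ⊤)
    (hres : ∀ p q r : Q, p * q ≤ r ↔ p ≤ himp q r)
    (H : ∀ p q : Q, p ⊔ q = ⊤ → p * q = ⊥ → p = ⊤ ∨ q = ⊤)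
    {ζ : X → Y → Q} (hζ : IsMap himp ζ) : ∃ f : X → Y, ζ = graph f := by
  have le_one : ∀ a : Q, a ≤ 1 := fun a => hint ▸ le_top
  have key : ∀ x, ∃ y, star himp ζ y x * ζ x y = ⊤ := fun x =>
    exists_eq_top_of_iSup_eq_top_of_pairwise_mul_eq_bot hint H
      (top_le_iff.1 (hint ▸ hζ.one_le_iSup_star_mul x)) fun y z hyz =>
        le_bot_iff.1 <| (mul_le_mul' (mul_le_of_le_one_right' (le_one _))
          (mul_le_of_le_one_left' (le_one _))).trans (star_mul_eq_bot hres hyz).le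
  choose f hf using key
  refine ⟨f, funext fun x => funext fun z => ?_⟩
  obtain rfl | hz := eq_or_ne z (f x)
  · rw [graph, if_pos rfl, hint]
    exact top_le_iff.1 (hf x ▸ mul_le_of_le_one_left' (le_one _))
  · have hstar : star himp ζ (f x) x = 1 :=
      hint ▸ top_le_iff.1 (hf x ▸ mul_le_of_le_one_right' (le_one _))
    rw [graph, if_neg hz, ← star_mul_eq_bot hres (Ne.symm hz), hstar, one_mul]

theorem isMap_cond [CommMonoid Q] [IsQuantale Q] (hint : (1 : Q) = ⊤)
    (hres : ∀ p q r : Q, p * q ≤ r ↔ p ≤ himp q r)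
    {p q : Q} (hsup : p ⊔ q = ⊤) (hmul : p * q = ⊥) :
    IsMap himp fun (_ : PUnit) (b : Bool) => cond b q p := by
  have hsup' : q ⊔ p = ⊤ := by rwa [sup_comm]
  have hmul' : q * p = ⊥ := by rwa [mul_comm]
  have himp_one : ∀ a : Q, himp a 1 = ⊤ := fun a =>
    top_le_iff.1 ((hres _ _ _).1 (by rw [hint]; exact le_top))
  set ζ : PUnit → Bool → Q := fun _ b => cond b q p
  have hstar : ∀ b u, star himp ζ b u = ζ u b := by
    intro b u
    cases b <;> simp [ζ, star, QR.id, iInf_bool_eq, himp_one,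
      himp_bot_eq_of_sup_eq_top_of_mul_eq_bot hint hres hsup hmul,
      himp_bot_eq_of_sup_eq_top_of_mul_eq_bot hint hres hsup' hmul']
  refine ⟨fun u u' => ?_, fun b b' => ?_⟩
  · calc QR.id PUnit u u' ≤ ⊤ := le_top
      _ = q * q ⊔ p * p := by
        rw [mul_self_eq_of_sup_eq_top_of_mul_eq_bot hint hsup hmul,
          mul_self_eq_of_sup_eq_top_of_mul_eq_bot hint hsup' hmul', hsup']
      _ = comp (star himp ζ) ζ u u' := by simp only [comp, hstar, iSup_bool_eq]; rfl
  · simp only [comp, hstar]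
    cases b <;> cases b' <;> simp [ζ, QR.id, hmul, hmul', hint]

end QR

/-- for a non-trivial commutative integral quantale (`k = ⊤`), every
`Q`-map between arbitrary sets is the graph of a map in `Set` iff
`(p ⊔ q = ⊤ and p & q = ⊥) → (p = ⊤ or q = ⊤)` for all `p, q`. -/
theorem stmt11 {Q : Type*} [CompleteLattice Q] [CommMonoid Q]
    (hbot : (⊥ : Q) < 1)
    (hdist : ∀ (p : Q) (s : Set Q), p * sSup s = ⨆ q ∈ s, p * q)
    (himp : Q → Q → Q)
    (hres : ∀ p q r : Q, p * q ≤ r ↔ p ≤ himp q r)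
    (hint : (1 : Q) = ⊤) :
    (∀ (X Y : Type) (ζ : X → Y → Q), QR.IsMap himp ζ →
      ∃ f : X → Y, ζ = QR.graph f) ↔
    (∀ p q : Q, p ⊔ q = ⊤ → p * q = ⊥ → p = ⊤ ∨ q = ⊤) := by
  have : IsQuantale Q := ⟨hdist, fun s p => by simpa only [mul_comm] using hdist p s⟩
  have : Nontrivial Q := ⟨⟨⊥, 1, hbot.ne⟩⟩
  refine ⟨fun H p q hsup hmul => ?_, fun H X Y ζ hζ => hζ.exists_eq_graph hint hres H⟩
  obtain ⟨f, hf⟩ := H PUnit Bool _ (QR.isMap_cond hint hres hsup hmul)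
  have hval : cond (f .unit) q p = ⊤ := by
    simpa [QR.graph, hint] using congrFun (congrFun hf .unit) (f .unit)
  generalize f .unit = b at hval
  cases b
  · exact Or.inl hval
  · exact Or.inr hval
end
end

section
/- Let Σ be a Q-partition of a set X and let ζ_Σ : X ⇸ Σ be the surjective Q-map defined by ζ_Σ(x,S) = Sx. Then the Q-partition induced by ζ_Σ coincides with Σ; concretely, for every T ∈ Σ and x ∈ X one has ζ_Σ(x,T) & (ζ_Σ)*(T,x) = Tx, so Σ_{ζ_Σ} = Σ. -/
/-!
Each value `a = T x` of a `Q`-partition is idempotent: `a = a & ⋁_S S x = a & a`, since the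
summands with `S ≠ T` vanish. Residuation then gives `a ≤ ζ*(T,x)` (as `a & S x` is `a` or `⊥`),
while `ζ(x,T) & ζ*(T,x) ≤ k` always holds; multiplying both bounds by the idempotent `a`
squeezes `a & ζ*(T,x)` to `a`.
-/

open Classical

noncomputable section

namespace QR

variable {Q : Type*} [CompleteLattice Q] [CommMonoid Q] {himp : Q → Q → Q}

theorem gc_mul_right_himp (hres : ∀ p q r : Q, p * q ≤ r ↔ p ≤ himp q r) (a : Q) :
    GaloisConnection (· * a) (himp a) :=
  fun p r => hres p a r

theorem mul_le_mul_left_of_residuated (hres : ∀ p q r : Q, p * q ≤ r ↔ p ≤ himp q r)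
    (a : Q) {q r : Q} (h : q ≤ r) : a * q ≤ a * r := by
  simpa only [mul_comm a] using (gc_mul_right_himp hres a).monotone_l h

variable {X Y : Type*}

theorem mul_self_eq_of_partition (hres : ∀ p q r : Q, p * q ≤ r ↔ p ≤ himp q r)
    (ζ : X → Y → Q) (hdisj : ∀ x, Pairwise fun S T => ζ x S * ζ x T = ⊥)
    (hsup : ∀ x, ⨆ S, ζ x S = 1) (x : X) (T : Y) : ζ x T * ζ x T = ζ x T := by
  have hdiag : ⨆ S, ζ x T * ζ x S = ζ x T * ζ x T := by
    refine le_antisymm (iSup_le fun S => ?_) (le_iSup (fun S => ζ x T * ζ x S) T)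
    by_cases hST : T = S
    · rw [hST]
    · rw [hdisj x hST]
      exact bot_le
  calc ζ x T * ζ x T = ⨆ S, ζ x T * ζ x S := hdiag.symm
    _ = ζ x T * ⨆ S, ζ x S := by
      simp only [mul_comm (ζ x T), (gc_mul_right_himp hres (ζ x T)).l_iSup]
    _ = ζ x T := by rw [hsup x, mul_one]

theorem le_star_of_partition (hres : ∀ p q r : Q, p * q ≤ r ↔ p ≤ himp q r)
    (ζ : X → Y → Q) (hdisj : ∀ x, Pairwise fun S T => ζ x S * ζ x T = ⊥)
    (hsup : ∀ x, ⨆ S, ζ x S = 1) (x : X) (T : Y) : ζ x T ≤ QR.star himp ζ T x := by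
  refine le_iInf fun S => (hres _ _ _).1 ?_
  by_cases hST : T = S
  · subst hST
    rw [QR.id, if_pos rfl, mul_self_eq_of_partition hres ζ hdisj hsup]
    exact (le_iSup (ζ x) T).trans_eq (hsup x)
  · simp only [QR.id, if_neg hST, hdisj x hST, le_refl]

theorem mul_star_le_one (hres : ∀ p q r : Q, p * q ≤ r ↔ p ≤ himp q r)
    (ζ : X → Y → Q) (x : X) (T : Y) : ζ x T * QR.star himp ζ T x ≤ 1 := by
  have h : QR.star himp ζ T x ≤ himp (ζ x T) (QR.id Y T T) := iInf_le _ T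
  rw [QR.id, if_pos rfl, ← hres, mul_comm] at h
  exact h

theorem mul_star_eq_of_partition (hres : ∀ p q r : Q, p * q ≤ r ↔ p ≤ himp q r)
    (ζ : X → Y → Q) (hdisj : ∀ x, Pairwise fun S T => ζ x S * ζ x T = ⊥)
    (hsup : ∀ x, ⨆ S, ζ x S = 1) (x : X) (T : Y) :
    ζ x T * QR.star himp ζ T x = ζ x T := by
  have hidem := mul_self_eq_of_partition hres ζ hdisj hsup x T
  apply le_antisymm
  · calc ζ x T * QR.star himp ζ T x = ζ x T * (ζ x T * QR.star himp ζ T x) := by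
          rw [← mul_assoc, hidem]
      _ ≤ ζ x T * 1 := mul_le_mul_left_of_residuated hres _ (mul_star_le_one hres ζ x T)
      _ = ζ x T := mul_one _
  · calc ζ x T = ζ x T * ζ x T := hidem.symm
      _ ≤ ζ x T * QR.star himp ζ T x :=
        mul_le_mul_left_of_residuated hres _ (le_star_of_partition hres ζ hdisj hsup x T)

end QR

theorem stmt14_general {Q : Type*} [CompleteLattice Q] [CommMonoid Q]
    (himp : Q → Q → Q)
    (hres : ∀ p q r : Q, p * q ≤ r ↔ p ≤ himp q r)
    {X : Type*} (P : Set (X → Q))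
    (hdisj : ∀ (x : X), ∀ S ∈ P, ∀ T ∈ P, S ≠ T → S x * T x = ⊥)
    (hsupS : ∀ x : X, (⨆ S : ↥P, (S : X → Q) x) = 1)
    (ζ : X → ↥P → Q) (hζ : ∀ (x : X) (S : ↥P), ζ x S = (S : X → Q) x) :
    (∀ (T : ↥P) (x : X), ζ x T * QR.star himp ζ T x = (T : X → Q) x) ∧
    Set.range (fun T : ↥P => fun x : X => ζ x T * QR.star himp ζ T x) = P := by
  obtain rfl : ζ = fun x (S : ↥P) => (S : X → Q) x := funext₂ hζ
  have hpair : ∀ x, Pairwise fun S T : ↥P => (S : X → Q) x * (T : X → Q) x = ⊥ :=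
    fun x S T hST => hdisj x S S.2 T T.2 (Subtype.val_injective.ne hST)
  have key := QR.mul_star_eq_of_partition hres _ hpair hsupS
  exact ⟨fun T x => key x T, by simp only [key, Subtype.range_coe_subtype, Set.ofPred_mem_eq]⟩

/-- for a `Q`-partition `P` of `X` with associated surjective `Q`-map
`ζ_P (x, S) = S x`, the induced `Q`-partition coincides with `P`:
`ζ_P(x,T) & ζ_P*(T,x) = T x` for all `T ∈ P` and `x ∈ X`, so `Σ_{ζ_P} = P`. -/
theorem stmt14 {Q : Type*} [CompleteLattice Q] [CommMonoid Q]
    (hbot : (⊥ : Q) < 1)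
    (hdist : ∀ (p : Q) (s : Set Q), p * sSup s = ⨆ q ∈ s, p * q)
    (himp : Q → Q → Q)
    (hres : ∀ p q r : Q, p * q ≤ r ↔ p ≤ himp q r)
    {X : Type*} (P : Set (X → Q))
    (hdisj : ∀ (x : X), ∀ S ∈ P, ∀ T ∈ P, S ≠ T → S x * T x = ⊥)
    (hsupS : ∀ x : X, (⨆ S : ↥P, (S : X → Q) x) = 1)
    (hsupx : ∀ S ∈ P, (⨆ x : X, S x) = 1)
    (ζ : X → ↥P → Q) (hζ : ∀ (x : X) (S : ↥P), ζ x S = (S : X → Q) x) :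
    (∀ (T : ↥P) (x : X), ζ x T * QR.star himp ζ T x = (T : X → Q) x) ∧
    Set.range (fun T : ↥P => fun x : X => ζ x T * QR.star himp ζ T x) = P :=
  stmt14_general himp hres P hdisj hsupS ζ hζ
end
end
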